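/- arXiv:math/9204221 — 4 statements merged into one kernel-verified Lean document; each statement's English description precedes it below -/
import Mathlib

section
/- Let M be a smooth manifold, let c : ℝ → M be a smooth curve with c(0) = x, and let k ≥ 1. Assume that for every smooth function f : M → ℝ the j-th derivative of t ↦ f(c(t)) at t = 0 vanishes for all 1 ≤ j ≤ k−1. Then the map f ↦ (d^k/dt^k)|_{t=0} f(c(t)) satisfies the Leibniz rule at x: for all smooth f, g : M → ℝ, (d^k/dt^k)|_{t=0} (f·g)(c(t)) = ((d^k/dt^k)|_{t=0} f(c(t)))·g(x) + f(x)·((d^k/dt^k)|_{t=0} g(c(t))). -/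
open scoped Manifold
open Set Function

noncomputable section

variable {E : Type*} [NormedAddCommGroup E] [NormedSpace ℝ E]
  {H : Type*} [TopologicalSpace H]

instance {M : Type*} [TopologicalSpace M] [ChartedSpace H M] {I : ModelWithCorners ℝ E H}
    {x : M} : NormedAddCommGroup (TangentSpace I x) :=
  inferInstanceAs (NormedAddCommGroup E)

instance {M : Type*} [TopologicalSpace M] [ChartedSpace H M] {I : ModelWithCorners ℝ E H}
    {x : M} : NormedSpace ℝ (TangentSpace I x) :=
  inferInstanceAs (NormedSpace ℝ E)

/-- The differential `(df)_x(v)` of a real valued function `f` at `x`,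
applied to a tangent vector `v`, as a real number. -/
def dApply (I : ModelWithCorners ℝ E H) {M : Type*} [TopologicalSpace M] [ChartedSpace H M]
    (f : M → ℝ) (x : M) (v : TangentSpace I x) : ℝ :=
  mfderiv I 𝓘(ℝ, ℝ) f x v

/-- A vector field is smooth if it is a smooth section of the tangent bundle. -/
def IsSmoothVectorField (I : ModelWithCorners ℝ E H) {M : Type*} [TopologicalSpace M]
    [ChartedSpace H M] [IsManifold I (⊤ : ℕ∞) M] (X : ∀ x : M, TangentSpace I x) : Prop :=
  ContMDiff I I.tangent (⊤ : ℕ∞) (fun x => (⟨x, X x⟩ : TangentBundle I M))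

/-- The pullback of a vector field under a map between manifolds, within a set
(Mathlib's `mpullbackWithin`). -/
def mpullbackWithin (I : ModelWithCorners ℝ E H) {E' : Type*} [NormedAddCommGroup E']
    [NormedSpace ℝ E'] {H' : Type*} [TopologicalSpace H'] (I' : ModelWithCorners ℝ E' H')
    {M : Type*} [TopologicalSpace M] [ChartedSpace H M]
    {M' : Type*} [TopologicalSpace M'] [ChartedSpace H' M']
    (f : M → M') (V : ∀ x : M', TangentSpace I' x) (s : Set M) (x : M) :
    TangentSpace I x :=
  (mfderivWithin I I' f s x).inverse (V (f x))

/-- The pullback of a vector field under a map between manifolds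
(Mathlib's `mpullback`): `x ↦ (T_x f)⁻¹ (V (f x))`. -/
def mpullback (I : ModelWithCorners ℝ E H) {E' : Type*} [NormedAddCommGroup E']
    [NormedSpace ℝ E'] {H' : Type*} [TopologicalSpace H'] (I' : ModelWithCorners ℝ E' H')
    {M : Type*} [TopologicalSpace M] [ChartedSpace H M]
    {M' : Type*} [TopologicalSpace M'] [ChartedSpace H' M']
    (f : M → M') (V : ∀ x : M', TangentSpace I' x) (x : M) :
    TangentSpace I x :=
  (mfderiv I I' f x).inverse (V (f x))

/-- The Lie bracket of two vector fields on a manifold (Mathlib's `mlieBracket` convention: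
`[X,Y] = X(Y) - Y(X)`), defined by pulling the vector fields back to the model space via the
preferred chart and taking the Lie bracket of vector fields there. -/
def mlieBracket (I : ModelWithCorners ℝ E H) {M : Type*} [TopologicalSpace M] [ChartedSpace H M]
    (V W : ∀ x : M, TangentSpace I x) (x₀ : M) : TangentSpace I x₀ :=
  mpullback I 𝓘(ℝ, E) (extChartAt I x₀)
    (VectorField.lieBracketWithin ℝ
      (mpullbackWithin 𝓘(ℝ, E) I (extChartAt I x₀).symm V (Set.range I))
      (mpullbackWithin 𝓘(ℝ, E) I (extChartAt I x₀).symm W (Set.range I))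
      (Set.range I)) x₀

/-- A smooth curve of diffeomorphisms through the identity on `M`: a jointly smooth map
`φ : ℝ × M → M` with `φ 0 = id`, each `φ t` bijective, with jointly smooth inverse. -/
structure DiffeoCurve (I : ModelWithCorners ℝ E H) (M : Type*) [TopologicalSpace M]
    [ChartedSpace H M] [IsManifold I (⊤ : ℕ∞) M] where
  toFun : ℝ → M → M
  invFun : ℝ → M → M
  smooth_toFun : ContMDiff (𝓘(ℝ, ℝ).prod I) I (⊤ : ℕ∞) fun p : ℝ × M => toFun p.1 p.2
  smooth_invFun : ContMDiff (𝓘(ℝ, ℝ).prod I) I (⊤ : ℕ∞) fun p : ℝ × M => invFun p.1 p.2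
  toFun_zero : ∀ x, toFun 0 x = x
  left_inv : ∀ t x, invFun t (toFun t x) = x
  right_inv : ∀ t x, toFun t (invFun t x) = x

/-- `φ` has first non-vanishing derivative `k! • X` at `0`: for every point `x` and smooth
`f : M → ℝ`, the `j`-th derivative of `t ↦ f (φ_t x)` at `0` vanishes for `1 ≤ j ≤ k-1`, and the
`k`-th derivative equals `k! * (df)_x (X x)`. -/
def HasFirstNonvanishingDeriv {I : ModelWithCorners ℝ E H} {M : Type*} [TopologicalSpace M]
    [ChartedSpace H M] [IsManifold I (⊤ : ℕ∞) M] (φ : DiffeoCurve I M) (k : ℕ)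
    (X : ∀ x : M, TangentSpace I x) : Prop :=
  ∀ (x : M) (f : M → ℝ), ContMDiff I 𝓘(ℝ, ℝ) (⊤ : ℕ∞) f →
    (∀ j : ℕ, 1 ≤ j → j < k → iteratedDeriv j (fun t => f (φ.toFun t x)) 0 = 0) ∧
    iteratedDeriv k (fun t => f (φ.toFun t x)) 0 = (k.factorial : ℝ) * dApply I f x (X x)

/-- The commutator `(α, β) ↦ β⁻¹ ∘ α⁻¹ ∘ β ∘ α` on pairs (curve, inverse curve). -/
def commOp {M : Type*} (p q : (ℝ → M → M) × (ℝ → M → M)) : (ℝ → M → M) × (ℝ → M → M) :=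
  (fun t x => q.2 t (p.2 t (q.1 t (p.1 t x))),
   fun t x => p.2 t (q.2 t (p.1 t (q.1 t x))))

theorem iteratedDeriv_mul_of_iteratedDeriv_eq_zero
    {𝕜 : Type*} [NontriviallyNormedField 𝕜] {𝔸 : Type*} [NormedRing 𝔸] [NormedAlgebra 𝕜 𝔸]
    {F G : 𝕜 → 𝔸} {x : 𝕜} {k : ℕ} (hk : 1 ≤ k)
    (hF : ContDiffAt 𝕜 k F x) (hG : ContDiffAt 𝕜 k G x)
    (hF_vanish : ∀ j, 1 ≤ j → j < k → iteratedDeriv j F x = 0) :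
    iteratedDeriv k (fun t => F t * G t) x =
      iteratedDeriv k F x * G x + F x * iteratedDeriv k G x := by
  obtain ⟨m, rfl⟩ : ∃ m, k = m + 1 := ⟨k - 1, by omega⟩
  have h_middle : ∀ j ∈ Finset.range (m + 1), j ≠ 0 →
      ((m + 1).choose j : 𝔸) * iteratedDeriv j F x * iteratedDeriv (m + 1 - j) G x = 0 := by
    intro j hj hj0
    rw [hF_vanish j (by omega) (Finset.mem_range.1 hj), mul_zero, zero_mul]
  rw [iteratedDeriv_fun_mul hF hG, Finset.sum_range_succ,
    Finset.sum_eq_single_of_mem 0 (by simp) h_middle]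
  simp [add_comm]

theorem leibniz_rule_of_lower_derivs_vanish_general
    {E : Type*} [NormedAddCommGroup E] [NormedSpace ℝ E]
    {H : Type*} [TopologicalSpace H] {I : ModelWithCorners ℝ E H}
    {M : Type*} [TopologicalSpace M] [ChartedSpace H M]
    (c : ℝ → M) (hc : ContMDiff 𝓘(ℝ, ℝ) I (⊤ : ℕ∞) c) (x : M) (hcx : c 0 = x)
    (k : ℕ) (hk : 1 ≤ k)
    (hvanish : ∀ f : M → ℝ, ContMDiff I 𝓘(ℝ, ℝ) (⊤ : ℕ∞) f →
      ∀ j : ℕ, 1 ≤ j → j < k → iteratedDeriv j (fun t => f (c t)) 0 = 0) :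
    ∀ f g : M → ℝ, ContMDiff I 𝓘(ℝ, ℝ) (⊤ : ℕ∞) f → ContMDiff I 𝓘(ℝ, ℝ) (⊤ : ℕ∞) g →
      iteratedDeriv k (fun t => f (c t) * g (c t)) 0 =
        iteratedDeriv k (fun t => f (c t)) 0 * g x
          + f x * iteratedDeriv k (fun t => g (c t)) 0 := by
  intro f g hf hg
  subst hcx
  have h_comp : ∀ u : M → ℝ, ContMDiff I 𝓘(ℝ, ℝ) (⊤ : ℕ∞) u →
      ContDiffAt ℝ k (fun t => u (c t)) 0 := fun u hu =>
    ((hu.comp hc).contDiff.of_le (mod_cast le_top)).contDiffAt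
  exact iteratedDeriv_mul_of_iteratedDeriv_eq_zero hk (h_comp f hf) (h_comp g hg) (hvanish f hf)

/-- If `c : ℝ → M` is a smooth curve with `c 0 = x` and, for every smooth
`f : M → ℝ`, the derivatives of `t ↦ f (c t)` at `0` of orders `1,…,k-1` vanish, then
`f ↦ (d^k/dt^k)|₀ f (c t)` satisfies the Leibniz rule at `x`. -/
theorem leibniz_rule_of_lower_derivs_vanish
    {E : Type*} [NormedAddCommGroup E] [NormedSpace ℝ E] [FiniteDimensional ℝ E]
    {H : Type*} [TopologicalSpace H] {I : ModelWithCorners ℝ E H} [I.Boundaryless]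
    {M : Type*} [TopologicalSpace M] [ChartedSpace H M] [IsManifold I (⊤ : ℕ∞) M]
    (c : ℝ → M) (hc : ContMDiff 𝓘(ℝ, ℝ) I (⊤ : ℕ∞) c) (x : M) (hcx : c 0 = x)
    (k : ℕ) (hk : 1 ≤ k)
    (hvanish : ∀ f : M → ℝ, ContMDiff I 𝓘(ℝ, ℝ) (⊤ : ℕ∞) f →
      ∀ j : ℕ, 1 ≤ j → j < k → iteratedDeriv j (fun t => f (c t)) 0 = 0) :
    ∀ f g : M → ℝ, ContMDiff I 𝓘(ℝ, ℝ) (⊤ : ℕ∞) f → ContMDiff I 𝓘(ℝ, ℝ) (⊤ : ℕ∞) g →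
      iteratedDeriv k (fun t => f (c t) * g (c t)) 0 =
        iteratedDeriv k (fun t => f (c t)) 0 * g x
          + f x * iteratedDeriv k (fun t => g (c t)) 0 :=
  leibniz_rule_of_lower_derivs_vanish_general c hc x hcx k hk hvanish
end
end

section
/- Let M be a smooth manifold, let X and Y be smooth vector fields on M, and let φ, ψ : ℝ × M → M be smooth maps with φ_0 = id_M, ψ_0 = id_M, such that for all (t,x) the derivative of s ↦ φ_s(x) at s = t equals X(φ_t(x)) and the derivative of s ↦ ψ_s(x) at s = t equals Y(ψ_t(x)) (φ is a global flow of X and ψ a global flow of Y). Define α_t(x) = ψ_{−t}(φ_{−t}(ψ_t(φ_t(x)))). Then for every smooth function f : M → ℝ and every x ∈ M, the first derivative of t ↦ f(α_t(x)) at t = 0 is 0. -/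
open scoped Manifold
open Set Function

noncomputable section

variable {E : Type*} [NormedAddCommGroup E] [NormedSpace ℝ E]
  {H : Type*} [TopologicalSpace H]

/-
At `t = 0` the derivative of `t ↦ f (α_t x)` is the sum of the two partial derivatives of
`(s, t) ↦ f (ψ_{-s} (φ_{-s} (ψ_t (φ_t x))))` at the origin. Since `φ_0 = ψ_0 = id`, its restriction
to the `t`-axis is `G t = f (ψ_t (φ_t x))` and its restriction to the `s`-axis is `G (-s)`, so the
partial derivatives are `G'(0)` and `-G'(0)`.
-/

section Diagonal

variable {F : Type*} [NormedAddCommGroup F] [NormedSpace ℝ F]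

theorem HasFDerivAt.hasDerivAt_diag {g : ℝ × ℝ → F} {g' : ℝ × ℝ →L[ℝ] F} {a : ℝ}
    (hg : HasFDerivAt g g' (a, a)) :
    HasDerivAt (fun t => g (t, t)) (g' (1, 0) + g' (0, 1)) a := by
  have h := hg.comp_hasDerivAt (f := fun t => (t, t)) a
    ((hasDerivAt_id a).prodMk (hasDerivAt_id a))
  rwa [← map_add, Prod.mk_add_mk, add_zero, zero_add]

theorem HasFDerivAt.hasDerivAt_partial_fst {g : ℝ × ℝ → F} {g' : ℝ × ℝ →L[ℝ] F} {a b : ℝ}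
    (hg : HasFDerivAt g g' (a, b)) : HasDerivAt (fun s => g (s, b)) (g' (1, 0)) a :=
  hg.comp_hasDerivAt (f := fun s => (s, b)) a ((hasDerivAt_id a).prodMk (hasDerivAt_const a b))

theorem HasFDerivAt.hasDerivAt_partial_snd {g : ℝ × ℝ → F} {g' : ℝ × ℝ →L[ℝ] F} {a b : ℝ}
    (hg : HasFDerivAt g g' (a, b)) : HasDerivAt (fun t => g (a, t)) (g' (0, 1)) b :=
  hg.comp_hasDerivAt (f := fun t => (a, t)) b ((hasDerivAt_const b a).prodMk (hasDerivAt_id b))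

theorem deriv_diag_eq_zero_of_apply_zero_eq_neg {g : ℝ × ℝ → F}
    (hg : DifferentiableAt ℝ g (0, 0)) (hax : ∀ s, g (s, 0) = g (0, -s)) :
    deriv (fun t => g (t, t)) 0 = 0 := by
  set G : ℝ → F := fun t => g (0, t)
  have hG : HasDerivAt G (fderiv ℝ g (0, 0) (0, 1)) 0 := hg.hasFDerivAt.hasDerivAt_partial_snd
  have hfst : fderiv ℝ g (0, 0) (1, 0) = -fderiv ℝ g (0, 0) (0, 1) := by
    have h := hg.hasFDerivAt.hasDerivAt_partial_fst.deriv
    simp only [hax] at h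
    rw [← h, deriv_comp_neg (f := G), neg_zero, hG.deriv]
  rw [hg.hasFDerivAt.hasDerivAt_diag.deriv, hfst, neg_add_cancel]

end Diagonal

theorem ContMDiff.contDiff_of_prod {E₁ E₂ F : Type*} [NormedAddCommGroup E₁] [NormedSpace ℝ E₁]
    [NormedAddCommGroup E₂] [NormedSpace ℝ E₂] [NormedAddCommGroup F] [NormedSpace ℝ F]
    {n : WithTop ℕ∞} {g : E₁ × E₂ → F} (hg : ContMDiff (𝓘(ℝ, E₁).prod 𝓘(ℝ, E₂)) 𝓘(ℝ, F) n g) :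
    ContDiff ℝ n g := by
  rw [← modelWithCornersSelf_prod, chartedSpaceSelf_prod] at hg
  exact contMDiff_iff_contDiff.mp hg

theorem first_deriv_commutator_of_flows_eq_zero_general
    {E : Type*} [NormedAddCommGroup E] [NormedSpace ℝ E]
    {H : Type*} [TopologicalSpace H] {I : ModelWithCorners ℝ E H}
    {M : Type*} [TopologicalSpace M] [ChartedSpace H M]
    (φ ψ : ℝ → M → M)
    (hφ : ContMDiff (𝓘(ℝ, ℝ).prod I) I (⊤ : ℕ∞) fun p : ℝ × M => φ p.1 p.2)
    (hψ : ContMDiff (𝓘(ℝ, ℝ).prod I) I (⊤ : ℕ∞) fun p : ℝ × M => ψ p.1 p.2)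
    (hφ0 : ∀ x : M, φ 0 x = x) (hψ0 : ∀ x : M, ψ 0 x = x)
    (f : M → ℝ) (hf : ContMDiff I 𝓘(ℝ, ℝ) (⊤ : ℕ∞) f) (x : M) :
    deriv (fun t => f (ψ (-t) (φ (-t) (ψ t (φ t x))))) 0 = 0 := by
  set g : ℝ × ℝ → ℝ := fun p => f (ψ (-p.1) (φ (-p.1) (ψ p.2 (φ p.2 x))))
  have hg : ContMDiff (𝓘(ℝ, ℝ).prod 𝓘(ℝ, ℝ)) 𝓘(ℝ, ℝ) (⊤ : ℕ∞) g :=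
    hf.comp <| hψ.comp <| contMDiff_fst.neg.prodMk <| hφ.comp <| contMDiff_fst.neg.prodMk <|
      hψ.comp <| contMDiff_snd.prodMk <| hφ.comp <| contMDiff_snd.prodMk contMDiff_const
  refine deriv_diag_eq_zero_of_apply_zero_eq_neg (g := g) ?_ fun s => by simp [g, hφ0, hψ0]
  exact hg.contDiff_of_prod.differentiable (by simp) _

/-- If `φ` and `ψ` are global flows of smooth vector fields `X` and `Y`
with `φ 0 = ψ 0 = id`, and `α_t = ψ_{-t} ∘ φ_{-t} ∘ ψ_t ∘ φ_t`, then for every smooth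
`f : M → ℝ` and every `x`, the first derivative of `t ↦ f (α_t x)` at `0` vanishes. -/
theorem first_deriv_commutator_of_flows_eq_zero
    {E : Type*} [NormedAddCommGroup E] [NormedSpace ℝ E] [FiniteDimensional ℝ E]
    {H : Type*} [TopologicalSpace H] {I : ModelWithCorners ℝ E H} [I.Boundaryless]
    {M : Type*} [TopologicalSpace M] [ChartedSpace H M] [IsManifold I (⊤ : ℕ∞) M]
    (X Y : ∀ x : M, TangentSpace I x)
    (hX : IsSmoothVectorField I X) (hY : IsSmoothVectorField I Y)
    (φ ψ : ℝ → M → M)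
    (hφ : ContMDiff (𝓘(ℝ, ℝ).prod I) I (⊤ : ℕ∞) fun p : ℝ × M => φ p.1 p.2)
    (hψ : ContMDiff (𝓘(ℝ, ℝ).prod I) I (⊤ : ℕ∞) fun p : ℝ × M => ψ p.1 p.2)
    (hφ0 : ∀ x : M, φ 0 x = x) (hψ0 : ∀ x : M, ψ 0 x = x)
    (hφflow : ∀ (t : ℝ) (x : M), mfderiv 𝓘(ℝ, ℝ) I (fun s => φ s x) t ((1 : ℝ)) = X (φ t x))
    (hψflow : ∀ (t : ℝ) (x : M), mfderiv 𝓘(ℝ, ℝ) I (fun s => ψ s x) t ((1 : ℝ)) = Y (ψ t x))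
    (f : M → ℝ) (hf : ContMDiff I 𝓘(ℝ, ℝ) (⊤ : ℕ∞) f) (x : M) :
    deriv (fun t => f (ψ (-t) (φ (-t) (ψ t (φ t x))))) 0 = 0 :=
  first_deriv_commutator_of_flows_eq_zero_general φ ψ hφ hψ hφ0 hψ0 f hf x
end
end

section
/- Let M be a smooth manifold, let φ be a smooth curve of diffeomorphisms through the identity on M, let k ≥ 1, and let X be a smooth vector field on M such that φ has first non-vanishing derivative k!·X at 0. For a smooth function f : M → ℝ and x ∈ M define g(t) = (d/ds)|_{s=t} f(φ_s(φ_t^{-1}(x))) (the action on f of the right logarithmic derivative (∂_tφ_t)∘φ_t^{-1} at x). Then the r-th derivative of g at t = 0 vanishes for all 0 ≤ r ≤ k−2, and the (k−1)-st derivative of g at t = 0 equals k!·(df)_x(X(x)). -/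
open scoped Manifold
open Set Function

noncomputable section

variable {E : Type*} [NormedAddCommGroup E] [NormedSpace ℝ E]
  {H : Type*} [TopologicalSpace H]

/-!
Write `B s t = f (φ_s (φ_t⁻¹ x))`, so that `g t = ∂_s B (t, t)`. For fixed `t`, `s ↦ B s t` is `f`
along the curve `φ_s` started at `φ_t⁻¹ x`, so `∂_s^a B (0, t) = 0` for `1 ≤ a < k` and every `t`:
these derivatives vanish on the whole line `s = 0`, hence so do their `t`-derivatives. Writing
`∂_(1,1) = ∂_s + ∂_t` for the derivative along the diagonal, every term of
`g^{(r)} 0 = ∂_(1,1)^r ∂_s B (0, 0)` that carries a `∂_t` therefore drops out, leaving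
`∂_s^{r+1} B (0, 0)`, the `(r+1)`-st derivative of `s ↦ f (φ_s x)` at `0`.
-/

open scoped ContDiff

section DirDeriv

variable {V G : Type*} [NormedAddCommGroup V] [NormedSpace ℝ V]
  [NormedAddCommGroup G] [NormedSpace ℝ G]

def dirDeriv (v : V) (F : V → G) : V → G := fun p => fderiv ℝ F p v

theorem contDiff_dirDeriv {F : V → G} (hF : ContDiff ℝ ∞ F) (v : V) :
    ContDiff ℝ ∞ (dirDeriv v F) :=
  (contDiff_infty_iff_fderiv.1 hF).2.clm_apply contDiff_const

theorem contDiff_iterate_dirDeriv {F : V → G} (hF : ContDiff ℝ ∞ F) (v : V) (a : ℕ) :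
    ContDiff ℝ ∞ ((dirDeriv v)^[a] F) := by
  induction a generalizing F with
  | zero => exact hF
  | succ a ih => exact ih (contDiff_dirDeriv hF v)

theorem hasDerivAt_comp_line_dirDeriv {F : V → G} (hF : Differentiable ℝ F) (p v : V) (τ : ℝ) :
    HasDerivAt (fun s : ℝ => F (p + s • v)) (dirDeriv v F (p + τ • v)) τ := by
  have hline : HasDerivAt (fun s : ℝ => p + s • v) v τ := by
    simpa using ((hasDerivAt_id τ).smul_const v).const_add p
  exact (hF _).hasFDerivAt.comp_hasDerivAt τ hline

theorem iteratedDeriv_comp_line {F : V → G} (hF : ContDiff ℝ ∞ F) (p v : V) (r : ℕ) (τ : ℝ) :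
    iteratedDeriv r (fun s : ℝ => F (p + s • v)) τ = (dirDeriv v)^[r] F (p + τ • v) := by
  induction r generalizing F with
  | zero => simp
  | succ r ih =>
    have hderiv : deriv (fun s : ℝ => F (p + s • v)) = fun s => dirDeriv v F (p + s • v) :=
      funext fun s => (hasDerivAt_comp_line_dirDeriv (hF.differentiable (by decide)) p v s).deriv
    rw [iteratedDeriv_succ', hderiv, ih (contDiff_dirDeriv hF v)]
    rfl

theorem dirDeriv_eq_zero_of_eq_zero_on_line {F : V → G} (hF : Differentiable ℝ F) {p v : V}
    (hzero : ∀ s : ℝ, F (p + s • v) = 0) : dirDeriv v F p = 0 := by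
  have hline := hasDerivAt_comp_line_dirDeriv hF p v 0
  simp only [hzero, zero_smul, add_zero] at hline
  exact hline.unique (hasDerivAt_const 0 0)

theorem dirDeriv_add_left (F : V → G) (v w p : V) :
    dirDeriv (v + w) F p = dirDeriv v F p + dirDeriv w F p :=
  (fderiv ℝ F p).map_add v w

theorem dirDeriv_comm {F : V → G} (hF : ContDiff ℝ 2 F) (v w : V) :
    dirDeriv w (dirDeriv v F) = dirDeriv v (dirDeriv w F) := by
  funext p
  have hdF : Differentiable ℝ (fderiv ℝ F) :=
    (hF.fderiv_right (m := 1) (by norm_num)).differentiable (by simp)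
  have happly (u : V) :
      fderiv ℝ (fun y => fderiv ℝ F y u) p = (fderiv ℝ (fderiv ℝ F) p).flip u := by
    simpa using fderiv_clm_apply (hdF p) (differentiableAt_const u)
  show fderiv ℝ (fun y => fderiv ℝ F y v) p w = fderiv ℝ (fun y => fderiv ℝ F y w) p v
  rw [happly v, happly w]
  exact hF.contDiffAt.isSymmSndFDerivAt (by simp) w v

theorem iterate_dirDeriv_comm {F : V → G} (hF : ContDiff ℝ ∞ F) (v w : V) (a : ℕ) :
    (dirDeriv v)^[a] (dirDeriv w F) = dirDeriv w ((dirDeriv v)^[a] F) := by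
  induction a generalizing F with
  | zero => rfl
  | succ a ih =>
    rw [Function.iterate_succ_apply, dirDeriv_comm (hF.of_le ENat.LEInfty.out) w v,
      ih (contDiff_dirDeriv hF v), Function.iterate_succ_apply]

end DirDeriv

section Diagonal

local notation "∂₁" => dirDeriv ((1 : ℝ), (0 : ℝ))
local notation "∂₂" => dirDeriv ((0 : ℝ), (1 : ℝ))
local notation "∂₁₂" => dirDeriv ((1 : ℝ), (1 : ℝ))

theorem iterate_dirDeriv_fst_dirDeriv_diag {F : ℝ × ℝ → ℝ} (hF : ContDiff ℝ ∞ F) (a : ℕ)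
    (hvan : ∀ t : ℝ, (∂₁)^[a] F (0, t) = 0) (t : ℝ) :
    (∂₁)^[a] (∂₁₂ F) (0, t) = (∂₁)^[a + 1] F (0, t) := by
  have hsplit : ((1 : ℝ), (1 : ℝ)) = ((1 : ℝ), (0 : ℝ)) + ((0 : ℝ), (1 : ℝ)) := by simp
  have hvert : ∂₂ ((∂₁)^[a] F) (0, t) = 0 :=
    dirDeriv_eq_zero_of_eq_zero_on_line
      ((contDiff_iterate_dirDeriv hF _ a).differentiable (by decide))
      fun s => by simpa using hvan (t + s)
  rw [iterate_dirDeriv_comm hF, hsplit, dirDeriv_add_left, hvert, add_zero,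
    Function.iterate_succ_apply']

theorem iterate_dirDeriv_diag_dirDeriv_fst {F : ℝ × ℝ → ℝ} (hF : ContDiff ℝ ∞ F) (r : ℕ)
    (hvan : ∀ a : ℕ, 1 ≤ a → a ≤ r → ∀ t : ℝ, (∂₁)^[a] F (0, t) = 0) :
    (∂₁₂)^[r] (∂₁ F) (0, 0) = (∂₁)^[r + 1] F (0, 0) := by
  induction r generalizing F with
  | zero => rfl
  | succ r ih =>
    have hvan' : ∀ a : ℕ, 1 ≤ a → a ≤ r → ∀ t : ℝ, (∂₁)^[a] (∂₁₂ F) (0, t) = 0 := by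
      intro a ha har t
      rw [iterate_dirDeriv_fst_dirDeriv_diag hF a (hvan a ha (by omega)) t]
      exact hvan (a + 1) (by omega) (by omega) t
    rw [Function.iterate_succ_apply, dirDeriv_comm (hF.of_le ENat.LEInfty.out),
      ih (contDiff_dirDeriv hF _) hvan',
      iterate_dirDeriv_fst_dirDeriv_diag hF (r + 1) (hvan (r + 1) (by omega) le_rfl) 0]

end Diagonal

theorem iteratedDeriv_deriv_diag {F : ℝ × ℝ → ℝ} (hF : ContDiff ℝ ∞ F) (r : ℕ)
    (hvan : ∀ a : ℕ, 1 ≤ a → a ≤ r → ∀ t : ℝ, iteratedDeriv a (fun s : ℝ => F (s, t)) 0 = 0) :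
    iteratedDeriv r (fun t : ℝ => deriv (fun s : ℝ => F (s, t)) t) 0 =
      iteratedDeriv (r + 1) (fun s : ℝ => F (s, 0)) 0 := by
  have hhoriz (t : ℝ) : (fun s : ℝ => F (s, t)) = fun s => F ((0, t) + s • (1, 0)) := by
    funext s; simp
  have hdiag : (fun t : ℝ => deriv (fun s : ℝ => F (s, t)) t) =
      fun t => dirDeriv (1, 0) F ((0, 0) + t • (1, 1)) := by
    funext t
    rw [hhoriz, ← iteratedDeriv_one, iteratedDeriv_comp_line hF]
    simp
  rw [hdiag, iteratedDeriv_comp_line (contDiff_dirDeriv hF _), hhoriz, iteratedDeriv_comp_line hF]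
  simpa using iterate_dirDeriv_diag_dirDeriv_fst hF r fun a ha har t => by
    simpa [hhoriz, iteratedDeriv_comp_line hF] using hvan a ha har t

namespace DiffeoCurve

variable {I : ModelWithCorners ℝ E H} {M : Type*} [TopologicalSpace M] [ChartedSpace H M]
  [IsManifold I (⊤ : ℕ∞) M] (φ : DiffeoCurve I M)

theorem invFun_zero (x : M) : φ.invFun 0 x = x := by
  simpa [φ.toFun_zero] using φ.left_inv 0 x

theorem contDiff_comp_toFun_invFun {f : M → ℝ} (hf : ContMDiff I 𝓘(ℝ, ℝ) (⊤ : ℕ∞) f) (x : M) :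
    ContDiff ℝ ∞ fun p : ℝ × ℝ => f (φ.toFun p.1 (φ.invFun p.2 x)) := by
  have hprod : ContMDiff (𝓘(ℝ, ℝ).prod 𝓘(ℝ, ℝ)) 𝓘(ℝ, ℝ) (⊤ : ℕ∞)
      fun p : ℝ × ℝ => f (φ.toFun p.1 (φ.invFun p.2 x)) :=
    hf.comp (φ.smooth_toFun.comp (contMDiff_fst.prodMk
      (φ.smooth_invFun.comp (contMDiff_snd.prodMk contMDiff_const))))
  have hself : ContMDiff 𝓘(ℝ, ℝ × ℝ) 𝓘(ℝ, ℝ) (⊤ : ℕ∞)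
      fun p : ℝ × ℝ => f (φ.toFun p.1 (φ.invFun p.2 x)) := by
    rw [modelWithCornersSelf_prod, ← chartedSpaceSelf_prod]
    exact hprod
  exact hself.contDiff

theorem iteratedDeriv_rightLogDeriv {k : ℕ} {X : ∀ x : M, TangentSpace I x}
    (hφX : HasFirstNonvanishingDeriv φ k X) {f : M → ℝ} (hf : ContMDiff I 𝓘(ℝ, ℝ) (⊤ : ℕ∞) f)
    (x : M) {r : ℕ} (hr : r < k) :
    iteratedDeriv r (fun t => deriv (fun s => f (φ.toFun s (φ.invFun t x))) t) 0 =
      iteratedDeriv (r + 1) (fun s => f (φ.toFun s x)) 0 := by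
  rw [iteratedDeriv_deriv_diag (φ.contDiff_comp_toFun_invFun hf x) r
    fun a ha har t => (hφX (φ.invFun t x) f hf).1 a ha (by omega)]
  simp only [φ.invFun_zero]

end DiffeoCurve

theorem right_logarithmic_derivative_first_nonvanishing_deriv_general
    {E : Type*} [NormedAddCommGroup E] [NormedSpace ℝ E]
    {H : Type*} [TopologicalSpace H] {I : ModelWithCorners ℝ E H}
    {M : Type*} [TopologicalSpace M] [ChartedSpace H M] [IsManifold I (⊤ : ℕ∞) M]
    (φ : DiffeoCurve I M) (k : ℕ) (hk : 1 ≤ k)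
    (X : ∀ x : M, TangentSpace I x)
    (hφX : HasFirstNonvanishingDeriv φ k X)
    (f : M → ℝ) (hf : ContMDiff I 𝓘(ℝ, ℝ) (⊤ : ℕ∞) f) (x : M) :
    (∀ r : ℕ, r + 2 ≤ k →
      iteratedDeriv r (fun t => deriv (fun s => f (φ.toFun s (φ.invFun t x))) t) 0 = 0) ∧
    iteratedDeriv (k - 1) (fun t => deriv (fun s => f (φ.toFun s (φ.invFun t x))) t) 0 =
      (k.factorial : ℝ) * dApply I f x (X x) := by
  refine ⟨fun r hr => ?_, ?_⟩
  · rw [φ.iteratedDeriv_rightLogDeriv hφX hf x (by omega)]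
    exact (hφX x f hf).1 (r + 1) (by omega) (by omega)
  · rw [φ.iteratedDeriv_rightLogDeriv hφX hf x (by omega), Nat.sub_add_cancel hk]
    exact (hφX x f hf).2

/-- If `φ` has first non-vanishing derivative `k! • X` at `0` and
`g t = (d/ds)|_{s=t} f (φ_s (φ_t⁻¹ x))` is the action of the right logarithmic derivative
`(∂_t φ_t) ∘ φ_t⁻¹` on a smooth `f` at `x`, then the derivatives of `g` at `0` of orders
`0,…,k-2` vanish and the `(k-1)`-st derivative equals `k! * (df)_x (X x)`. -/
theorem right_logarithmic_derivative_first_nonvanishing_deriv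
    {E : Type*} [NormedAddCommGroup E] [NormedSpace ℝ E] [FiniteDimensional ℝ E]
    {H : Type*} [TopologicalSpace H] {I : ModelWithCorners ℝ E H} [I.Boundaryless]
    {M : Type*} [TopologicalSpace M] [ChartedSpace H M] [IsManifold I (⊤ : ℕ∞) M]
    (φ : DiffeoCurve I M) (k : ℕ) (hk : 1 ≤ k)
    (X : ∀ x : M, TangentSpace I x) (hX : IsSmoothVectorField I X)
    (hφX : HasFirstNonvanishingDeriv φ k X)
    (f : M → ℝ) (hf : ContMDiff I 𝓘(ℝ, ℝ) (⊤ : ℕ∞) f) (x : M) :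
    (∀ r : ℕ, r + 2 ≤ k →
      iteratedDeriv r (fun t => deriv (fun s => f (φ.toFun s (φ.invFun t x))) t) 0 = 0) ∧
    iteratedDeriv (k - 1) (fun t => deriv (fun s => f (φ.toFun s (φ.invFun t x))) t) 0 =
      (k.factorial : ℝ) * dApply I f x (X x) :=
  right_logarithmic_derivative_first_nonvanishing_deriv_general φ k hk X hφX f hf x
end
end

section
/- Let A be a complete normed (Banach) algebra over ℝ with unit, let X, Y, Z ∈ A, and let [g,h] = g·h·g^{-1}·h^{-1} denote the group commutator of invertible elements. Define c : ℝ → A by c(t) = [[exp(tX), exp(tY)], exp(tZ)]. Then c(0) = 1, the first and second derivatives of c at t = 0 vanish, and the third derivative of c at t = 0 equals 3!·⁅⁅X, Y⁆, Z⁆, where ⁅X,Y⁆ = X·Y − Y·X is the ring commutator. -/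
open scoped Topology

noncomputable section

/-- The group commutator `[g, h] = g * h * g⁻¹ * h⁻¹` of (invertible) elements of an algebra,
inverses being taken by `Ring.inverse`. -/
def groupCommutator {A : Type*} [NormedRing A] (g h : A) : A :=
  g * h * Ring.inverse g * Ring.inverse h

/-!
Near `1` one has `[g, h] - 1 = ((g - 1) (h - 1) - (h - 1) (g - 1)) g⁻¹ h⁻¹`. Hence, by the
Leibniz rule, if `g - 1` and `h - 1` vanish to orders `m` and `n` with leading Taylor
coefficients `p` and `q`, then `[g, h] - 1` vanishes to order `m + n` with leading coefficient
`p q - q p`. Starting from `exp (t X) - 1 = t X + O(t²)` and applying this twice gives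
`c t - 1 = t³ ⁅⁅X, Y⁆, Z⁆ + O(t⁴)`.
-/

open scoped Nat ContDiff
open NormedSpace

section LeadingTerm

variable {𝕜 A : Type*} [NontriviallyNormedField 𝕜] [NormedRing A] [NormedAlgebra 𝕜 A]
  {f g : 𝕜 → A} {x : 𝕜} {m n : ℕ} {a b : A}

/-- `f` is smooth at `x` and `f t = a • (t - x) ^ n + O((t - x) ^ (n + 1))`, expressed through
the derivatives of `f` at `x`; `a = 0` is allowed. -/
structure HasLeadingTerm (f : 𝕜 → A) (x : 𝕜) (n : ℕ) (a : A) : Prop where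
  contDiffAt : ContDiffAt 𝕜 ∞ f x
  iteratedDeriv_of_lt : ∀ k < n, iteratedDeriv k f x = 0
  iteratedDeriv_self : iteratedDeriv n f x = n ! • a

theorem ContDiffAt.hasLeadingTerm_zero (hf : ContDiffAt 𝕜 ∞ f x) :
    HasLeadingTerm f x 0 (f x) :=
  ⟨hf, fun _ hk => absurd hk (Nat.not_lt_zero _), by simp⟩

theorem HasLeadingTerm.congr_of_eventuallyEq (hf : HasLeadingTerm f x n a) (hg : g =ᶠ[𝓝 x] f) :
    HasLeadingTerm g x n a :=
  ⟨hf.contDiffAt.congr_of_eventuallyEq hg,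
    fun k hk => (hg.iteratedDeriv_eq k).trans (hf.iteratedDeriv_of_lt k hk),
    (hg.iteratedDeriv_eq n).trans hf.iteratedDeriv_self⟩

theorem HasLeadingTerm.sub (hf : HasLeadingTerm f x n a) (hg : HasLeadingTerm g x n b) :
    HasLeadingTerm (fun t => f t - g t) x n (a - b) := by
  have hsub : ∀ k : ℕ, iteratedDeriv k (fun t => f t - g t) x =
      iteratedDeriv k f x - iteratedDeriv k g x := fun k =>
    iteratedDeriv_fun_sub (hf.contDiffAt.of_le (by exact_mod_cast le_top))
      (hg.contDiffAt.of_le (by exact_mod_cast le_top))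
  refine ⟨hf.contDiffAt.sub hg.contDiffAt, fun k hk => ?_, ?_⟩
  · rw [hsub, hf.iteratedDeriv_of_lt k hk, hg.iteratedDeriv_of_lt k hk, sub_zero]
  · rw [hsub, hf.iteratedDeriv_self, hg.iteratedDeriv_self, smul_sub]

theorem HasLeadingTerm.mul (hf : HasLeadingTerm f x m a) (hg : HasLeadingTerm g x n b) :
    HasLeadingTerm (fun t => f t * g t) x (m + n) (a * b) := by
  have leibniz : ∀ k : ℕ, iteratedDeriv k (fun t => f t * g t) x = ∑ i ∈ .range (k + 1),
      (k.choose i : A) * iteratedDeriv i f x * iteratedDeriv (k - i) g x := fun k =>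
    iteratedDeriv_fun_mul (hf.contDiffAt.of_le (by exact_mod_cast le_top))
      (hg.contDiffAt.of_le (by exact_mod_cast le_top))
  have term_eq_zero : ∀ k i, i < m ∨ k - i < n →
      (k.choose i : A) * iteratedDeriv i f x * iteratedDeriv (k - i) g x = 0 := by
    rintro k i (hi | hi)
    · rw [hf.iteratedDeriv_of_lt i hi, mul_zero, zero_mul]
    · rw [hg.iteratedDeriv_of_lt (k - i) hi, mul_zero]
  refine ⟨hf.contDiffAt.mul hg.contDiffAt, fun k hk => ?_, ?_⟩
  · rw [leibniz]
    exact Finset.sum_eq_zero fun i hi => term_eq_zero k i (by grind)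
  · rw [leibniz,
      Finset.sum_eq_single_of_mem m (by simp) fun i hi him => term_eq_zero _ i (by grind),
      hf.iteratedDeriv_self, Nat.add_sub_cancel_left, hg.iteratedDeriv_self, ← nsmul_eq_mul,
      smul_mul_assoc, smul_mul_assoc, mul_smul_comm, smul_smul, smul_smul]
    congr 1
    simpa using Nat.choose_mul_factorial_mul_factorial (Nat.le_add_right m n)

theorem groupCommutator_sub_one {R : Type*} [NormedRing R] {g h : R} (hg : IsUnit g)
    (hh : IsUnit h) : groupCommutator g h - 1 =
      ((g - 1) * (h - 1) - (h - 1) * (g - 1)) * (Ring.inverse g * Ring.inverse h) := by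
  have hgg : g * Ring.inverse g = 1 := Ring.mul_inverse_cancel g hg
  have hhh : h * Ring.inverse h = 1 := Ring.mul_inverse_cancel h hh
  calc groupCommutator g h - 1
      = g * h * Ring.inverse g * Ring.inverse h - h * g * Ring.inverse g * Ring.inverse h := by
        rw [groupCommutator, mul_assoc h, hgg, mul_one, hhh]
    _ = _ := by noncomm_ring

theorem HasLeadingTerm.groupCommutator [CompleteSpace A] {g h : 𝕜 → A} {p q : A}
    (hg : HasLeadingTerm (fun t => g t - 1) x m p) (hh : HasLeadingTerm (fun t => h t - 1) x n q)
    (hg₁ : g x = 1) (hh₁ : h x = 1) :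
    HasLeadingTerm (fun t => groupCommutator (g t) (h t) - 1) x (m + n) (p * q - q * p) := by
  have hg_smooth : ContDiffAt 𝕜 ∞ g x := by
    simpa using hg.contDiffAt.add (contDiffAt_const (c := (1 : A)))
  have hh_smooth : ContDiffAt 𝕜 ∞ h x := by
    simpa using hh.contDiffAt.add (contDiffAt_const (c := (1 : A)))
  have hinv_one : ContDiffAt 𝕜 ∞ Ring.inverse (1 : A) := by
    simpa using contDiffAt_ringInverse 𝕜 (1 : Aˣ)
  have hinv : ContDiffAt 𝕜 ∞ (fun t => Ring.inverse (g t) * Ring.inverse (h t)) x :=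
    ((hg₁ ▸ hinv_one).comp x hg_smooth).mul ((hh₁ ▸ hinv_one).comp x hh_smooth)
  have hunits : ∀ᶠ t in 𝓝 x, IsUnit (g t) ∧ IsUnit (h t) :=
    (hg_smooth.continuousAt.eventually_mem (Units.isOpen.mem_nhds (by simp [hg₁]))).and
      (hh_smooth.continuousAt.eventually_mem (Units.isOpen.mem_nhds (by simp [hh₁])))
  have := ((hg.mul hh).sub (add_comm n m ▸ hh.mul hg)).mul hinv.hasLeadingTerm_zero
  rw [hg₁, hh₁, Ring.inverse_one, mul_one, mul_one] at this
  exact this.congr_of_eventuallyEq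
    (hunits.mono fun t ⟨hgt, hht⟩ => groupCommutator_sub_one hgt hht)

end LeadingTerm

theorem iteratedDeriv_sub_const {𝕜 F : Type*} [NontriviallyNormedField 𝕜]
    [NormedAddCommGroup F] [NormedSpace 𝕜 F] {k : ℕ} (hk : 0 < k) (f : 𝕜 → F) (c : F) (x : 𝕜) :
    iteratedDeriv k (fun t => f t - c) x = iteratedDeriv k f x := by
  rw [← iteratedDeriv_const_add hk c]
  simp

theorem hasLeadingTerm_exp_smul_sub_one {𝕂 A : Type*} [RCLike 𝕂] [NormedRing A]
    [NormedAlgebra 𝕂 A] [CompleteSpace A] (X : A) :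
    HasLeadingTerm (fun t : 𝕂 => exp (t • X) - 1) 0 1 X := by
  refine ⟨?_, fun k hk => ?_, ?_⟩
  · exact ((exp_analytic (𝕂 := 𝕂) _).comp (by fun_prop)).contDiffAt.sub contDiffAt_const
  · simp [Nat.lt_one_iff.mp hk]
  · simpa using ((hasDerivAt_exp_smul_const X (0 : 𝕂)).sub_const 1).deriv

/-- In a Banach algebra `A` over `ℝ` with unit, for `X Y Z : A` the curve
`c t = [[exp(tX), exp(tY)], exp(tZ)]` (iterated group commutator) satisfies `c 0 = 1`,
`c' 0 = 0`, `c'' 0 = 0`, and `c''' 0 = 3! • ⁅⁅X, Y⁆, Z⁆`, where `⁅X, Y⁆ = X*Y - Y*X` is the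
ring commutator. -/
theorem third_deriv_exp_group_commutator
    {A : Type*} [NormedRing A] [NormedAlgebra ℝ A] [CompleteSpace A]
    (X Y Z : A) (c : ℝ → A)
    (hc : ∀ t : ℝ, c t =
      groupCommutator (groupCommutator (NormedSpace.exp (t • X)) (NormedSpace.exp (t • Y)))
        (NormedSpace.exp (t • Z))) :
    c 0 = 1 ∧ deriv c 0 = 0 ∧ iteratedDeriv 2 c 0 = 0 ∧
      iteratedDeriv 3 c 0 =
        Nat.factorial 3 • ((X * Y - Y * X) * Z - Z * (X * Y - Y * X)) := by
  have hXY := (hasLeadingTerm_exp_smul_sub_one (𝕂 := ℝ) X).groupCommutator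
    (hasLeadingTerm_exp_smul_sub_one Y) (by simp) (by simp)
  have hc₃ : HasLeadingTerm (fun t => c t - 1) 0 3
      ((X * Y - Y * X) * Z - Z * (X * Y - Y * X)) := by
    simpa only [hc] using hXY.groupCommutator (hasLeadingTerm_exp_smul_sub_one Z)
      (by simp [groupCommutator]) (by simp)
  have hderiv : ∀ k, 0 < k → iteratedDeriv k c 0 = iteratedDeriv k (fun t => c t - 1) 0 :=
    fun k hk => (iteratedDeriv_sub_const hk c 1 0).symm
  refine ⟨?_, ?_, ?_, ?_⟩
  · simpa [sub_eq_zero] using hc₃.iteratedDeriv_of_lt 0 (by norm_num)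
  · rw [← iteratedDeriv_one, hderiv 1 one_pos]
    exact hc₃.iteratedDeriv_of_lt 1 (by norm_num)
  · rw [hderiv 2 two_pos]
    exact hc₃.iteratedDeriv_of_lt 2 (by norm_num)
  · rw [hderiv 3 three_pos]
    exact hc₃.iteratedDeriv_self
end
end
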